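/- Let H ∈ (0,1/2] and let m ≥ 2 be an integer. Then for all integers i, j with 1 ≤ i < j, one has | (j − i)^{2H} − ( m·(⌈j/m⌉ − ⌈i/m⌉) )^{2H} | ≤ (m − 1)^{2H}. Consequently, if B^H satisfies E(B_s^H − B_t^H)² = |s−t|^{2H}, then for any integer n ≥ 1 and all 1 ≤ i < j ≤ nm, | E(B_{i/(nm)}^H − B_{j/(nm)}^H)² − E(B_{⌈i/m⌉/n}^H − B_{⌈j/m⌉/n}^H)² | ≤ n^{−2H} (1 − 1/m)^{2H}. -/

import Mathlib

/-!
Rounding each grid index `k` up to the next multiple `m⌈k/m⌉` of `m` moves it by at most `m - 1`,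
so the two increments `j - i` and `m(⌈j/m⌉ - ⌈i/m⌉)` differ by at most `m - 1`. For `0 ≤ p ≤ 1` the
map `x ↦ x ^ p` is subadditive on `[0, ∞)`, hence `p`-Hölder with constant `1`, which gives the first
bound. The second is the first one rescaled by `(nm)^{-2H}`, by self-similarity of `|s - t| ^ (2H)`.
-/

open MeasureTheory Real Set

theorem Real.abs_rpow_sub_rpow_le_abs_sub_rpow {x y p : ℝ} (hx : 0 ≤ x) (hy : 0 ≤ y) (hp : 0 ≤ p)
    (hp1 : p ≤ 1) : |x ^ p - y ^ p| ≤ |x - y| ^ p := by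
  wlog hyx : y ≤ x generalizing x y
  · rw [abs_sub_comm, abs_sub_comm x y]
    exact this hy hx (le_of_not_ge hyx)
  have hsub : x ^ p ≤ (x - y) ^ p + y ^ p := by
    simpa using rpow_add_le_add_rpow (sub_nonneg.2 hyx) hy hp hp1
  rw [abs_of_nonneg (sub_nonneg.2 (rpow_le_rpow hy hyx hp)), abs_of_nonneg (sub_nonneg.2 hyx)]
  linarith

theorem Int.le_mul_ceil_div (k : ℤ) {m : ℕ} (hm : 0 < m) : k ≤ m * ⌈(k : ℝ) / m⌉ := by
  have hm' : (0 : ℝ) < m := by exact_mod_cast hm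
  have h : (k : ℝ) ≤ m * ⌈(k : ℝ) / m⌉ := by
    rw [← div_le_iff₀' hm']
    exact Int.le_ceil _
  exact_mod_cast h

theorem Int.mul_ceil_div_le (k : ℤ) {m : ℕ} (hm : 0 < m) : m * ⌈(k : ℝ) / m⌉ ≤ k + m - 1 := by
  have hm' : (0 : ℝ) < m := by exact_mod_cast hm
  have h : ((⌈(k : ℝ) / m⌉ - 1 : ℤ) : ℝ) * m < k := by
    rw [← lt_div_iff₀ hm']
    exact Int.lt_ceil.1 (sub_one_lt _)
  have h' : (⌈(k : ℝ) / m⌉ - 1) * m < k := by exact_mod_cast h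
  linarith

theorem Int.abs_sub_sub_mul_ceil_div_sub_le {i j : ℤ} {m : ℕ} (hm : 0 < m) :
    |((j : ℝ) - i) - m * ((⌈(j : ℝ) / m⌉ : ℝ) - ⌈(i : ℝ) / m⌉)| ≤ (m : ℝ) - 1 := by
  have hi := Int.le_mul_ceil_div i hm
  have hi' := Int.mul_ceil_div_le i hm
  have hj := Int.le_mul_ceil_div j hm
  have hj' := Int.mul_ceil_div_le j hm
  have h : |(j - i) - m * (⌈(j : ℝ) / m⌉ - ⌈(i : ℝ) / m⌉)| ≤ (m : ℤ) - 1 := by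
    rw [abs_le]
    constructor <;> linarith
  exact_mod_cast h

theorem Int.cast_ceil_div_le_cast_ceil_div {x y c : ℝ} (hxy : x ≤ y) (hc : 0 ≤ c) :
    (⌈x / c⌉ : ℝ) ≤ ⌈y / c⌉ :=
  Int.cast_le.2 (Int.ceil_mono (div_le_div_of_nonneg_right hxy hc))

theorem abs_sub_rpow_sub_mul_ceil_div_sub_rpow_le {i j : ℤ} (hij : i ≤ j) {m : ℕ} (hm : 0 < m)
    {p : ℝ} (hp : 0 ≤ p) (hp1 : p ≤ 1) :
    |((j : ℝ) - i) ^ p - ((m : ℝ) * ((⌈(j : ℝ) / m⌉ : ℝ) - ⌈(i : ℝ) / m⌉)) ^ p| ≤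
      ((m : ℝ) - 1) ^ p := by
  have hceil : (⌈(i : ℝ) / m⌉ : ℝ) ≤ ⌈(j : ℝ) / m⌉ :=
    Int.cast_ceil_div_le_cast_ceil_div (Int.cast_le.2 hij) m.cast_nonneg
  calc _ ≤ |((j : ℝ) - i) - m * ((⌈(j : ℝ) / m⌉ : ℝ) - ⌈(i : ℝ) / m⌉)| ^ p :=
        abs_rpow_sub_rpow_le_abs_sub_rpow (sub_nonneg.2 (by exact_mod_cast hij))
          (mul_nonneg m.cast_nonneg (sub_nonneg.2 hceil)) hp hp1
    _ ≤ ((m : ℝ) - 1) ^ p := rpow_le_rpow (abs_nonneg _) (Int.abs_sub_sub_mul_ceil_div_sub_le hm) hp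

theorem Real.sub_one_rpow_div_mul_rpow {n m p : ℝ} (hn : 0 < n) (hm : 1 ≤ m) :
    (m - 1) ^ p / (n * m) ^ p = n ^ (-p) * (1 - 1 / m) ^ p := by
  have hm0 : 0 < m := by linarith
  have h : 1 - 1 / m = (m - 1) / m := by field_simp
  rw [h, div_rpow (by linarith) hm0.le, mul_rpow hn.le hm0.le, rpow_neg hn.le]
  field_simp

theorem abs_div_sub_div_of_le {a b c : ℝ} (hab : a ≤ b) (hc : 0 < c) :
    |a / c - b / c| = (b - a) / c := by
  rw [abs_sub_comm, ← sub_div, abs_div, abs_of_pos hc, abs_of_nonneg (sub_nonneg.2 hab)]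

theorem abs_div_rpow_sub_div_rpow {a b c p : ℝ} (ha : 0 ≤ a) (hb : 0 ≤ b) (hc : 0 < c) :
    |(a / c) ^ p - (b / c) ^ p| = |a ^ p - b ^ p| / c ^ p := by
  rw [div_rpow ha hc.le, div_rpow hb hc.le, ← sub_div, abs_div, abs_of_pos (rpow_pos_of_pos hc p)]

/-- The increment-variance comparison: for `H ∈ (0,1/2]` and an integer `m ≥ 2`,
`| (j-i)^{2H} - (m(⌈j/m⌉-⌈i/m⌉))^{2H} | ≤ (m-1)^{2H}` for all `1 ≤ i < j`;
consequently, for a process with `E(B_s - B_t)² = |s-t|^{2H}`, the grid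
variance distortion is at most `n^{-2H} (1 - 1/m)^{2H}`. -/
theorem increment_variance_comparison {Ω : Type*} [MeasureSpace Ω]
    (H : ℝ) (hH : H ∈ Set.Ioc (0 : ℝ) (1 / 2)) (m : ℕ) (hm : 2 ≤ m) :
    (∀ i j : ℕ, 1 ≤ i → i < j →
      |((j : ℝ) - (i : ℝ)) ^ (2 * H) -
          ((m : ℝ) * ((⌈(j : ℝ) / (m : ℝ)⌉ : ℝ) - (⌈(i : ℝ) / (m : ℝ)⌉ : ℝ))) ^ (2 * H)| ≤
        ((m : ℝ) - 1) ^ (2 * H)) ∧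
    ∀ B : ℝ → Ω → ℝ,
      (∀ s t : ℝ, 0 ≤ s → 0 ≤ t →
        ∫ ω, (B s ω - B t ω) ^ 2 = |s - t| ^ (2 * H)) →
      ∀ n : ℕ, 1 ≤ n → ∀ i j : ℕ, 1 ≤ i → i < j → j ≤ n * m →
        |(∫ ω, (B ((i : ℝ) / ((n : ℝ) * (m : ℝ))) ω -
              B ((j : ℝ) / ((n : ℝ) * (m : ℝ))) ω) ^ 2) -
            ∫ ω, (B ((⌈(i : ℝ) / (m : ℝ)⌉ : ℝ) / (n : ℝ)) ω -
              B ((⌈(j : ℝ) / (m : ℝ)⌉ : ℝ) / (n : ℝ)) ω) ^ 2| ≤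
          (n : ℝ) ^ (-(2 * H)) * (1 - 1 / (m : ℝ)) ^ (2 * H) := by
  obtain ⟨hH0, hH1⟩ := hH
  have hp : 0 ≤ 2 * H := by positivity
  have hp1 : 2 * H ≤ 1 := by linarith
  have hm0 : 0 < m := by omega
  have hincrement (i j : ℕ) (hij : i ≤ j) := abs_sub_rpow_sub_mul_ceil_div_sub_rpow_le
    (Int.ofNat_le.2 hij) hm0 hp hp1
  push_cast at hincrement
  refine ⟨fun i j _ hij => hincrement i j hij.le, fun B hB n hn i j _ hij _ => ?_⟩
  have hn0 : (0 : ℝ) < n := by exact_mod_cast hn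
  have hm0' : (0 : ℝ) < m := by exact_mod_cast hm0
  have hij' : (i : ℝ) ≤ j := Nat.cast_le.2 hij.le
  have hceil : (⌈(i : ℝ) / m⌉ : ℝ) ≤ ⌈(j : ℝ) / m⌉ :=
    Int.cast_ceil_div_le_cast_ceil_div hij' hm0'.le
  rw [hB _ _ (by positivity) (by positivity), hB _ _ (by positivity) (by positivity),
    abs_div_sub_div_of_le hij' (by positivity), abs_div_sub_div_of_le hceil hn0,
    ← mul_div_mul_left _ (n : ℝ) hm0'.ne', mul_comm (m : ℝ) n,
    abs_div_rpow_sub_div_rpow (sub_nonneg.2 hij') (mul_nonneg hm0'.le (sub_nonneg.2 hceil))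
      (by positivity), ← sub_one_rpow_div_mul_rpow hn0 (Nat.one_le_cast.2 hm0)]
  gcongr
  exact hincrement i j hij.le
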